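/- Let f be a 2π-periodic function on ℝ that extends to a holomorphic function on the open strip {t ∈ ℂ : |Im t| < d'} for some d' > d, bounded uniformly by M on the closed strip {|Im t| ≤ d}. Then the error of the N-point periodic trapezoid rule, |∫₀^{2π} f(t) dt − (2π/N) ∑_{j=1}^{N} f(2πj/N)|, is bounded by C·M·e^{−dN} for some constant C independent of N and f (indeed one may take the error ≤ 4πM e^{−dN}/(1 − e^{−dN})). -/

import Mathlib

open Real MeasureTheory

/-!
The Fourier coefficients `c k` of `f` decay like `M e^{-d|k|}`: by Cauchy's theorem the integral
`∫ f(x) e^{-ikx} dx` may be moved to the line `Im z = -d · sign k`, the vertical sides of the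
rectangle cancelling by periodicity. Sampling the absolutely convergent Fourier series at the `N`
equispaced nodes annihilates every frequency not divisible by `N` (aliasing), so the trapezoid sum
is `2π ∑ₘ c (N m)` while the integral is `2π c 0`. The error is therefore at most
`2π ∑_{m ≠ 0} M e^{-dN|m|} = 4π M e^{-dN} / (1 - e^{-dN})`.
-/

open Complex Finset
open scoped Interval

theorem sum_range_pow_succ_of_pow_eq_one {K : Type*} [Field K] [DecidableEq K] {ω : K} {N : ℕ}
    (h : ω ^ N = 1) : ∑ j ∈ range N, ω ^ (j + 1) = if ω = 1 then (N : K) else 0 := by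
  split_ifs with hω
  · simp [hω]
  · have hgeom : (∑ j ∈ range N, ω ^ j) * (ω - 1) = 0 := by rw [geom_sum_mul, h, sub_self]
    simp only [pow_succ, ← sum_mul, mul_eq_zero.mp hgeom |>.resolve_right (sub_ne_zero.mpr hω),
      zero_mul]

theorem hasSum_pow_natAbs {r : ℝ} (hr0 : 0 ≤ r) (hr1 : r < 1) :
    HasSum (fun n : ℤ => r ^ n.natAbs) ((1 + r) / (1 - r)) := by
  have hgeom := hasSum_geometric_of_lt_one hr0 hr1
  convert HasSum.of_nat_of_neg_add_one (f := fun n : ℤ => r ^ n.natAbs) hgeom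
    ((hgeom.mul_left r).congr_fun fun n => by
      rw [show (-((n : ℤ) + 1)).natAbs = n + 1 by omega, pow_succ']) using 1
  field_simp [(sub_pos.mpr hr1).ne']

theorem integral_eq_integral_add_mul_I_of_periodic {E : Type*} [NormedAddCommGroup E]
    [NormedSpace ℂ E] [CompleteSpace E] {g : ℂ → E} {T σ : ℝ}
    (hg : DifferentiableOn ℂ g ([[0, T]] ×ℂ [[0, σ]])) (hper : ∀ z, g (z + T) = g z) :
    ∫ x in (0:ℝ)..T, g x = ∫ x in (0:ℝ)..T, g (x + σ * I) := by
  have hrect := integral_boundary_rect_eq_zero_of_differentiableOn g 0 (T + σ * I)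
    (by simpa using hg)
  have hsides : ∫ y in (0:ℝ)..σ, g (T + y * I) = ∫ y in (0:ℝ)..σ, g (0 + y * I) := by
    simp only [zero_add, add_comm (T : ℂ), hper]
  simp only [zero_re, zero_im, add_re, add_im, ofReal_re, ofReal_im, mul_re, mul_im, I_re, I_im,
    mul_zero, mul_one, sub_zero, zero_add, add_zero, ofReal_zero, zero_mul] at hrect
  simp only [zero_add] at hsides
  rwa [hsides, add_sub_cancel_right, sub_eq_zero] at hrect

theorem norm_integral_exp_mul_le_of_strip {f : ℂ → ℂ} {T d d' M : ℝ} (hT : 0 < T) (hdd' : d < d')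
    (hper : ∀ z, f (z + T) = f z) (hol : DifferentiableOn ℂ f {z | |z.im| < d'})
    (hbd : ∀ z, |z.im| ≤ d → ‖f z‖ ≤ M) (n : ℤ) {σ : ℝ} (hσ : |σ| ≤ d) :
    ‖∫ x in (0:ℝ)..T, exp (2 * π * I * n * x / T) * f x‖
      ≤ T * M * Real.exp (-2 * π * n * σ / T) := by
  set g : ℂ → ℂ := fun z => exp (2 * π * I * n * z / T) * f z
  have hrect : [[0, T]] ×ℂ [[0, σ]] ⊆ {z | |z.im| < d'} := fun z hz => by
    have him : |z.im - 0| ≤ |σ - 0| := Set.abs_sub_left_of_mem_uIcc hz.2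
    rw [sub_zero, sub_zero] at him
    exact him.trans_lt (hσ.trans_lt hdd')
  have hg : DifferentiableOn ℂ g ([[0, T]] ×ℂ [[0, σ]]) :=
    (Differentiable.differentiableOn (by fun_prop)).mul (hol.mono hrect)
  have hgper : ∀ z, g (z + T) = g z := by
    intro z
    have hT0 : (T : ℂ) ≠ 0 := by exact_mod_cast hT.ne'
    have hphase : 2 * π * I * n * (z + T) / T = 2 * π * I * n * z / T + n * (2 * π * I) := by
      field_simp
    simp only [g, hper, hphase, Complex.exp_add, exp_int_mul_two_pi_mul_I, mul_one]
  rw [integral_eq_integral_add_mul_I_of_periodic hg hgper]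
  have hbound : ∀ x ∈ Ι (0:ℝ) T, ‖g (x + σ * I)‖ ≤ M * Real.exp (-2 * π * n * σ / T) := by
    intro x _
    have hphase : (2 * π * I * n * (x + σ * I) / T).re = -2 * π * n * σ / T := by
      rw [div_ofReal_re]
      simp
    rw [norm_mul, mul_comm, norm_exp, hphase]
    exact mul_le_mul_of_nonneg_right (hbd _ (by simpa using hσ)) (Real.exp_nonneg _)
  simpa [abs_of_pos hT, mul_comm, mul_assoc, mul_left_comm] using
    intervalIntegral.norm_integral_le_of_norm_le_const hbound

theorem norm_fourierCoeff_le_of_strip {f : ℂ → ℂ} {T d d' M : ℝ} [hT : Fact (0 < T)]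
    (hd : 0 ≤ d) (hdd' : d < d') (hper : ∀ z, f (z + T) = f z)
    (hol : DifferentiableOn ℂ f {z | |z.im| < d'}) (hbd : ∀ z, |z.im| ≤ d → ‖f z‖ ≤ M)
    {F : AddCircle T → ℂ} (hF : ∀ x : ℝ, F x = f x) (k : ℤ) :
    ‖fourierCoeff F k‖ ≤ M * Real.exp (-2 * π * d / T) ^ k.natAbs := by
  have hT0 : 0 < T := hT.out
  -- shift the contour by `d` away from the real axis, in the direction where `e^{-ikz}` decays
  have hσ : |-(d * k.sign)| ≤ d := by
    rcases Int.sign_trichotomy k with h | h | h <;> simp [h, abs_of_nonneg hd, hd]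
  have hint := norm_integral_exp_mul_le_of_strip hT0 hdd' hper hol hbd (-k) hσ
  have hrate : -2 * π * ((-k : ℤ) : ℝ) * -(d * (k.sign : ℤ)) / T = k.natAbs * (-2 * π * d / T) := by
    have hnatAbs : (k.natAbs : ℝ) = k.sign * k := by
      rw [← Int.cast_natCast, ← k.sign_mul_self_eq_natAbs, Int.cast_mul]
    rw [hnatAbs]
    push_cast
    ring
  rw [hrate, Real.exp_nat_mul] at hint
  rw [fourierCoeff_eq_intervalIntegral F k 0, zero_add, norm_smul]
  simp only [fourier_coe_apply, hF, smul_eq_mul]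
  calc ‖1 / T‖ * ‖∫ x in (0:ℝ)..T, exp (2 * π * I * ((-k : ℤ) : ℂ) * x / T) * f x‖
      ≤ 1 / T * (T * M * Real.exp (-2 * π * d / T) ^ k.natAbs) := by
        rw [Real.norm_of_nonneg (by positivity)]
        gcongr
    _ = M * Real.exp (-2 * π * d / T) ^ k.natAbs := by field_simp

section Aliasing

variable {T : ℝ} [hT : Fact (0 < T)] {N : ℕ}

theorem sum_fourier_equispaced (hN : N ≠ 0) (k : ℤ) :
    ∑ j ∈ range N, fourier k ((T * (j + 1) / N : ℝ) : AddCircle T)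
      = if (N : ℤ) ∣ k then (N : ℂ) else 0 := by
  set ζ := exp (2 * π * I / N)
  have hζ : IsPrimitiveRoot ζ N := isPrimitiveRoot_exp N hN
  have hnode : ∀ j : ℕ, fourier k ((T * (j + 1) / N : ℝ) : AddCircle T) = (ζ ^ k) ^ (j + 1) := by
    intro j
    have hT0 : (T : ℂ) ≠ 0 := by exact_mod_cast hT.out.ne'
    rw [fourier_coe_apply, ← zpow_natCast, ← zpow_mul, ← exp_int_mul]
    congr 1
    push_cast
    field_simp
  have hpow : (ζ ^ k) ^ N = 1 := by
    rw [← zpow_natCast, ← zpow_mul, mul_comm k, zpow_mul, zpow_natCast, hζ.pow_eq_one, one_zpow]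
  simp only [hnode, sum_range_pow_succ_of_pow_eq_one hpow, hζ.zpow_eq_one_iff_dvd]

theorem hasSum_fourierCoeff_nat_mul {F : C(AddCircle T, ℂ)} (hF : Summable (fourierCoeff F))
    (hN : N ≠ 0) :
    HasSum (fun m : ℤ => fourierCoeff F (N * m))
      ((N : ℂ)⁻¹ * ∑ j ∈ range N, F ((T * (j + 1) / N : ℝ) : AddCircle T)) := by
  have hnodes : HasSum (fun k => fourierCoeff F k * if (N : ℤ) ∣ k then (N : ℂ) else 0)
      (∑ j ∈ range N, F ((T * (j + 1) / N : ℝ) : AddCircle T)) := by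
    convert hasSum_sum fun j (_ : j ∈ range N) =>
      has_pointwise_sum_fourier_series_of_summable hF ((T * (j + 1) / N : ℝ) : AddCircle T) with k
    rw [← sum_fourier_equispaced (T := T) hN k, mul_sum]
    rfl
  have hinj : Function.Injective fun m : ℤ => (N : ℤ) * m :=
    mul_right_injective₀ (by exact_mod_cast hN)
  rw [← hinj.hasSum_iff] at hnodes
  · have hN0 : (N : ℂ) ≠ 0 := by exact_mod_cast hN
    refine (hnodes.mul_left (N : ℂ)⁻¹).congr_fun fun m => ?_
    simp [inv_mul_cancel_left₀ hN0, mul_comm _ (N : ℂ)]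
  · rintro k hk
    rw [if_neg fun ⟨m, hm⟩ => hk ⟨m, hm.symm⟩, mul_zero]

end Aliasing

theorem norm_sub_le_of_hasSum_of_norm_le_geometric {E : Type*} [SeminormedAddCommGroup E]
    {a : ℤ → E} {S : E} {M r : ℝ} (ha : HasSum a S) (hr0 : 0 ≤ r) (hr1 : r < 1)
    (hb : ∀ m, ‖a m‖ ≤ M * r ^ m.natAbs) : ‖a 0 - S‖ ≤ 2 * M * r / (1 - r) := by
  have htail := (ha.update 0 0).norm_le_of_bounded
    (((hasSum_pow_natAbs hr0 hr1).mul_left M).update 0 0) fun m => by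
      rcases eq_or_ne m 0 with rfl | hm
      · simp
      · simpa [hm] using hb m
  rw [← norm_neg]
  convert htail using 1
  · abel_nf
  · field_simp [(sub_pos.mpr hr1).ne']
    ring

theorem norm_integral_sub_trapezoid_le {T : ℝ} [hT : Fact (0 < T)] {F : C(AddCircle T, ℂ)}
    {M r : ℝ} (hr0 : 0 ≤ r) (hr1 : r < 1) (hc : ∀ k, ‖fourierCoeff F k‖ ≤ M * r ^ k.natAbs)
    {N : ℕ} (hN : N ≠ 0) :
    ‖(∫ t in (0:ℝ)..T, F t) - T / N * ∑ j ∈ range N, F ((T * (j + 1) / N : ℝ) : AddCircle T)‖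
      ≤ 2 * T * M * r ^ N / (1 - r ^ N) := by
  have hsum : Summable (fourierCoeff F) :=
    .of_norm_bounded ((hasSum_pow_natAbs hr0 hr1).summable.mul_left M) hc
  have haliasing := norm_sub_le_of_hasSum_of_norm_le_geometric
    (hasSum_fourierCoeff_nat_mul hsum hN) (pow_nonneg hr0 N) (pow_lt_one₀ hr0 hr1 hN) fun m => by
      simpa [Int.natAbs_mul, pow_mul] using hc (N * m)
  have hint : ∫ t in (0:ℝ)..T, F t = T * fourierCoeff F 0 := by
    simp [fourierCoeff_eq_intervalIntegral F 0 0, hT.out.ne']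
  set S := ∑ j ∈ range N, F ((T * (j + 1) / N : ℝ) : AddCircle T)
  rw [hint, show (T : ℂ) * fourierCoeff F 0 - T / N * S = T * (fourierCoeff F 0 - (N : ℂ)⁻¹ * S) by
    ring, norm_mul, norm_real, Real.norm_of_nonneg hT.out.le]
  calc _ ≤ T * (2 * M * r ^ N / (1 - r ^ N)) :=
        mul_le_mul_of_nonneg_left (by simpa using haliasing) hT.out.le
    _ = _ := by ring

/-- Davis' theorem: exponential convergence of the periodic trapezoid rule
for `2π`-periodic functions analytic and bounded in a horizontal strip. -/
theorem ptr_exponential_convergence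
    (f : ℂ → ℂ) (d d' M : ℝ) (hd : 0 < d) (hdd' : d < d')
    (hper : ∀ z : ℂ, f (z + 2 * Real.pi) = f z)
    (hol : DifferentiableOn ℂ f {z : ℂ | |z.im| < d'})
    (hbd : ∀ z : ℂ, |z.im| ≤ d → ‖f z‖ ≤ M)
    (N : ℕ) (hN : 0 < N) :
    ‖(∫ t in (0:ℝ)..(2 * Real.pi), f t)
        - (2 * Real.pi / N) * ∑ j ∈ Finset.range N, f (2 * Real.pi * (j + 1) / N)‖
      ≤ 4 * Real.pi * M * Real.exp (-d * N) / (1 - Real.exp (-d * N)) := by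
  have : Fact (0 < 2 * π) := ⟨two_pi_pos⟩
  have hperR : Function.Periodic (fun t : ℝ => f t) (2 * π) := fun t => by simpa using hper t
  have hcont : Continuous fun t : ℝ => f t :=
    hol.continuousOn.comp_continuous continuous_ofReal fun t => by simpa using hd.trans hdd'
  let F : C(AddCircle (2 * π), ℂ) := ⟨hperR.lift, hcont.quotient_liftOn' _⟩
  have hF : ∀ t : ℝ, F t = f t := hperR.lift_coe
  have hdecay := norm_fourierCoeff_le_of_strip hd.le hdd' (by exact_mod_cast hper) hol hbd hF
  rw [show -2 * π * d / (2 * π) = -d by field_simp] at hdecay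
  have key := norm_integral_sub_trapezoid_le (Real.exp_pos _).le
    (Real.exp_lt_one_iff.mpr (neg_lt_zero.mpr hd)) hdecay hN.ne'
  rw [← Real.exp_nat_mul, mul_comm (N : ℝ)] at key
  simp only [hF] at key
  push_cast at key
  convert key using 2
  ring
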